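/- arXiv:2504.19904 — 4 statements merged into one kernel-verified Lean document; each statement's English description precedes it below -/
import Mathlib

section
/- Let ν ∈ (0,1), λ₁ > 0, c > 0, and set τ = (λ₁ ν^ν (1−ν)^{1−ν})^{1/(1−ν)}. Then for every s > 0, the infimum over θ ∈ (0,∞) of θ^{1−1/ν}·c^{1/ν}·s + τ·θ equals λ₁·c·s^ν, and this infimum is attained at some θ* > 0. -/
/-!
Write the objective as `ν a + (1 - ν) b` with `a = θ^(1-1/ν) A / ν` and `b = τ θ / (1 - ν)`.
The weighted geometric mean `a^ν b^(1-ν)` does not depend on `θ`, so weighted AM-GM bounds the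
objective from below by it, with equality where `a = b`. For `A = c^(1/ν) s` the choice of `τ`
makes this constant `λ₁ c s^ν`.
-/

open Real Set

section

variable {ν A τ θ : ℝ}

lemma geom_mean_weighted_summands_eq (hν : ν ∈ Ioo 0 1) (hA : 0 < A) (hτ : 0 < τ) (hθ : 0 < θ) :
    (θ ^ (1 - 1 / ν) * A / ν) ^ ν * (τ * θ / (1 - ν)) ^ (1 - ν) =
      (A / ν) ^ ν * (τ / (1 - ν)) ^ (1 - ν) := by
  obtain ⟨hν0, hν1⟩ := hν
  have h1ν : 0 < 1 - ν := sub_pos.mpr hν1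
  have hexp : (1 - 1 / ν) * ν + (1 - ν) = 0 := by field_simp; ring
  calc (θ ^ (1 - 1 / ν) * A / ν) ^ ν * (τ * θ / (1 - ν)) ^ (1 - ν)
      = (θ ^ (1 - 1 / ν)) ^ ν * (A / ν) ^ ν * (θ ^ (1 - ν) * (τ / (1 - ν)) ^ (1 - ν)) := by
        rw [mul_div_assoc, mul_rpow (by positivity) (by positivity), mul_comm τ, mul_div_assoc,
          mul_rpow hθ.le (by positivity)]
    _ = θ ^ ((1 - 1 / ν) * ν + (1 - ν)) * ((A / ν) ^ ν * (τ / (1 - ν)) ^ (1 - ν)) := by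
        rw [rpow_add hθ, rpow_mul hθ.le]
        ring
    _ = (A / ν) ^ ν * (τ / (1 - ν)) ^ (1 - ν) := by rw [hexp, rpow_zero, one_mul]

theorem isLeast_rpow_one_sub_inv_mul_add_mul (hν : ν ∈ Ioo 0 1) (hA : 0 < A) (hτ : 0 < τ) :
    IsLeast ((fun θ : ℝ => θ ^ (1 - 1 / ν) * A + τ * θ) '' Ioi 0)
      ((A / ν) ^ ν * (τ / (1 - ν)) ^ (1 - ν)) := by
  obtain ⟨hν0, hν1⟩ := id hν
  have h1ν : 0 < 1 - ν := sub_pos.mpr hν1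
  set m := (A / ν) ^ ν * (τ / (1 - ν)) ^ (1 - ν)
  have hm : 0 < m := by positivity
  have split : ∀ θ, θ ^ (1 - 1 / ν) * A + τ * θ =
      ν * (θ ^ (1 - 1 / ν) * A / ν) + (1 - ν) * (τ * θ / (1 - ν)) := fun θ => by
    field_simp
  constructor
  · -- Take `θ` with `b = m`; the geometric-mean identity then forces `a = m` as well.
    have hθ : 0 < m * (1 - ν) / τ := by positivity
    have hb : τ * (m * (1 - ν) / τ) / (1 - ν) = m := by field_simp
    have ha : (m * (1 - ν) / τ) ^ (1 - 1 / ν) * A / ν = m := by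
      have h := geom_mean_weighted_summands_eq hν hA hτ hθ
      rw [hb] at h
      have hm_split : m ^ ν * m ^ (1 - ν) = m := by rw [← rpow_add hm, add_sub_cancel, rpow_one]
      exact (rpow_left_inj (by positivity) hm.le hν0.ne').mp
        (mul_right_cancel₀ (rpow_pos_of_pos hm _).ne' (h.trans hm_split.symm))
    refine ⟨_, hθ, ?_⟩
    beta_reduce
    rw [split, ha, hb]
    ring
  · rintro _ ⟨θ, hθ : 0 < θ, rfl⟩
    beta_reduce
    rw [split]
    calc m = _ := (geom_mean_weighted_summands_eq hν hA hτ hθ).symm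
      _ ≤ _ := geom_mean_le_arith_mean2_weighted hν0.le h1ν.le (by positivity) (by positivity)
        (by ring)

end

/-- Scalar variational identity underlying the group bridge reformulation:
for `ν ∈ (0,1)`, `λ₁ > 0`, `c > 0`, `τ = (λ₁ ν^ν (1-ν)^(1-ν))^(1/(1-ν))` and any `s > 0`,
the infimum over `θ ∈ (0,∞)` of `θ^(1-1/ν) c^(1/ν) s + τ θ` equals `λ₁ c s^ν` and is attained. -/
theorem group_bridge_scalar_identity
    (ν lam₁ c τ s : ℝ)
    (hν : ν ∈ Set.Ioo (0 : ℝ) 1) (hlam₁ : 0 < lam₁) (hc : 0 < c)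
    (hτ : τ = (lam₁ * ν ^ ν * (1 - ν) ^ (1 - ν)) ^ ((1 : ℝ) / (1 - ν)))
    (hs : 0 < s) :
    IsLeast ((fun θ : ℝ => θ ^ (1 - 1 / ν) * c ^ ((1 : ℝ) / ν) * s + τ * θ) '' Set.Ioi 0)
      (lam₁ * c * s ^ ν) := by
  obtain ⟨hν0, hν1⟩ := hν
  have h1ν : 0 < 1 - ν := sub_pos.mpr hν1
  have hτ_pos : 0 < τ := by rw [hτ]; positivity
  have hconst : (c ^ (1 / ν) * s / ν) ^ ν * (τ / (1 - ν)) ^ (1 - ν) = lam₁ * c * s ^ ν := by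
    rw [div_rpow (by positivity) hν0.le, div_rpow hτ_pos.le h1ν.le, mul_rpow (by positivity) hs.le,
      one_div, rpow_inv_rpow hc.le hν0.ne', hτ, one_div, rpow_inv_rpow (by positivity) h1ν.ne']
    field_simp
  have key := isLeast_rpow_one_sub_inv_mul_add_mul ⟨hν0, hν1⟩
    (by positivity : 0 < c ^ (1 / ν) * s) hτ_pos
  rw [hconst] at key
  simpa only [mul_assoc] using key
end

section
/- Let ν ∈ (0,1), λ₁ > 0, τ = (λ₁ ν^ν (1−ν)^{1−ν})^{1/(1−ν)}, and let Q : ℝ^K → ℝ be an arbitrary function. Partition the coordinates of γ ∈ ℝ^K into m groups with blocks γ_j and weights c_j > 0. Define F(γ) = Q(γ) + λ₁ Σ_{j=1}^m c_j ‖γ_j‖₁^ν and, for θ ∈ (0,∞)^m, G(γ,θ) = Q(γ) + Σ_{j=1}^m θ_j^{1−1/ν} c_j^{1/ν} ‖γ_j‖₁ + τ Σ_{j=1}^m θ_j. Then: (i) for every γ with ‖γ_j‖₁ > 0 for all j, the infimum of G(γ,θ) over θ ∈ (0,∞)^m equals F(γ) and is attained; (ii) consequently, if (γ̂, θ̂)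 ∈ ℝ^K × (0,∞)^m minimizes G over all (γ,θ) with every block of γ nonzero, then γ̂ minimizes F over all γ ∈ ℝ^K whose blocks are all nonzero. -/
/-!
Blockwise, the penalty is a weighted AM-GM bound. For `a, τ > 0` and `0 < ν < 1`, writing
`θ ^ (1 - 1/ν) * a + τ * θ = ν * p₁ + (1 - ν) * p₂` with `p₁ = θ ^ (1 - 1/ν) * a / ν` and
`p₂ = τ * θ / (1 - ν)`, the powers of `θ` cancel in `p₁ ^ ν * p₂ ^ (1 - ν)`, so it is at least
`(a / ν) ^ ν * (τ / (1 - ν)) ^ (1 - ν)`, with equality where `p₁ = p₂`. The choice of `τ` makes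
this minimum `λ₁ * c * b ^ ν` for `a = c ^ (1/ν) * b`. Summing over blocks, `F γ` is the
minimum of `G γ` over `θ`, and a joint minimiser of `G` therefore minimises `F`.
-/

open Real Set

section
variable {ν a τ : ℝ}

lemma isLeast_rpow_mul_add_mul (hν0 : 0 < ν) (hν1 : ν < 1) (ha : 0 < a) (hτ : 0 < τ) :
    IsLeast ((fun θ => θ ^ (1 - 1 / ν) * a + τ * θ) '' Ioi 0)
      ((a / ν) ^ ν * (τ / (1 - ν)) ^ (1 - ν)) := by
  have h1ν : 0 < 1 - ν := by linarith
  set M := (a / ν) ^ ν * (τ / (1 - ν)) ^ (1 - ν)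
  have geom : ∀ θ > 0, (θ ^ (1 - 1 / ν) * a / ν) ^ ν * (τ * θ / (1 - ν)) ^ (1 - ν) = M := by
    intro θ hθ
    calc (θ ^ (1 - 1 / ν) * a / ν) ^ ν * (τ * θ / (1 - ν)) ^ (1 - ν)
        = (θ ^ (1 - 1 / ν) * (a / ν)) ^ ν * (θ * (τ / (1 - ν))) ^ (1 - ν) := by ring_nf
      _ = θ ^ ((1 - 1 / ν) * ν + (1 - ν)) * M := by
        rw [mul_rpow (by positivity) (by positivity), mul_rpow hθ.le (by positivity),
          ← rpow_mul hθ.le, rpow_add hθ]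
        ring
      _ = M := by
        rw [show (1 - 1 / ν) * ν + (1 - ν) = 0 by field_simp; ring, rpow_zero, one_mul]
  have arith : ∀ θ, ν * (θ ^ (1 - 1 / ν) * a / ν) + (1 - ν) * (τ * θ / (1 - ν))
      = θ ^ (1 - 1 / ν) * a + τ * θ := by
    intro θ; field_simp
  constructor
  · -- `p₁ = p₂` exactly when `θ ^ (1 / ν) = x`
    set x := a * (1 - ν) / (τ * ν) with hx_def
    have hx : 0 < x := by positivity
    have hθ₀ : 0 < x ^ ν := by positivity
    have balance : (x ^ ν) ^ (1 - 1 / ν) * a / ν = τ * x ^ ν / (1 - ν) := by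
      rw [rpow_sub hθ₀, rpow_one, one_div, rpow_rpow_inv hx.le hν0.ne', hx_def]
      field_simp
    refine ⟨x ^ ν, hθ₀, ?_⟩
    dsimp only
    rw [← geom _ hθ₀, ← arith, balance, ← rpow_add (by positivity), add_sub_cancel, rpow_one]
    ring
  · rintro _ ⟨θ, hθ : 0 < θ, rfl⟩
    calc M = _ := (geom θ hθ).symm
      _ ≤ _ := geom_mean_le_arith_mean2_weighted hν0.le h1ν.le (by positivity) (by positivity)
        (by ring)
      _ = _ := arith θ

variable {lam : ℝ}

lemma rpow_div_mul_rpow_div_eq (hν0 : 0 < ν) (hν1 : ν < 1) (hlam : 0 ≤ lam)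
    (hτ : τ = (lam * ν ^ ν * (1 - ν) ^ (1 - ν)) ^ ((1 : ℝ) / (1 - ν))) (ha : 0 ≤ a) :
    (a / ν) ^ ν * (τ / (1 - ν)) ^ (1 - ν) = lam * a ^ ν := by
  have h1ν : 0 < 1 - ν := by linarith
  have hτ' : τ ^ (1 - ν) = lam * ν ^ ν * (1 - ν) ^ (1 - ν) := by
    rw [hτ, one_div, rpow_inv_rpow (by positivity) h1ν.ne']
  rw [div_rpow ha hν0.le, div_rpow (hτ ▸ by positivity) h1ν.le, hτ']
  field_simp

lemma isLeast_bridge_penalty {c b : ℝ} (hν0 : 0 < ν) (hν1 : ν < 1) (hlam : 0 < lam)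
    (hτ : τ = (lam * ν ^ ν * (1 - ν) ^ (1 - ν)) ^ ((1 : ℝ) / (1 - ν))) (hc : 0 < c) (hb : 0 < b) :
    IsLeast ((fun θ => θ ^ (1 - 1 / ν) * c ^ ((1 : ℝ) / ν) * b + τ * θ) '' Ioi 0)
      (lam * (c * b ^ ν)) := by
  have h1ν : 0 < 1 - ν := by linarith
  have hτ_pos : 0 < τ := by rw [hτ]; positivity
  have h := isLeast_rpow_mul_add_mul hν0 hν1 (a := c ^ ((1 : ℝ) / ν) * b) (by positivity) hτ_pos
  rw [rpow_div_mul_rpow_div_eq hν0 hν1 hlam.le hτ (by positivity), mul_rpow (by positivity) hb.le,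
    one_div, rpow_inv_rpow hc.le hν0.ne', ← one_div] at h
  simpa only [mul_assoc] using h

end

theorem isLeast_image_pi_sum {ι α M : Type*} [Fintype ι] [AddCommMonoid M] [PartialOrder M]
    [IsOrderedAddMonoid M] {f : ι → α → M} {s : ι → Set α} {b : ι → M}
    (h : ∀ i, IsLeast (f i '' s i) (b i)) :
    IsLeast ((fun x => ∑ i, f i (x i)) '' univ.pi s) (∑ i, b i) := by
  choose x hx hfx using fun i => (h i).1
  refine ⟨⟨x, mem_univ_pi.2 hx, Finset.sum_congr rfl fun i _ => hfx i⟩, ?_⟩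
  rintro _ ⟨y, hy, rfl⟩
  exact Finset.sum_le_sum fun i _ => (h i).2 ⟨y i, mem_univ_pi.1 hy i, rfl⟩

theorem IsMinOn.of_uncurry_of_isLeast {α β γ : Type*} [Preorder γ] {F : α → γ} {G : α → β → γ}
    {s : Set α} {t : Set β} {a : α} {b : β} (hF : ∀ x ∈ s, IsLeast (G x '' t) (F x))
    (ha : a ∈ s) (hb : b ∈ t) (h : IsMinOn (Function.uncurry G) (s ×ˢ t) (a, b)) :
    IsMinOn F s a := by
  refine isMinOn_iff.2 fun x hx => ?_
  obtain ⟨⟨y, hy, hGy⟩, -⟩ := hF x hx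
  calc F a ≤ G a b := (hF a ha).2 ⟨b, hb, rfl⟩
    _ ≤ G x y := isMinOn_iff.1 h (x, y) ⟨hx, hy⟩
    _ = F x := hGy

/-- Group bridge reformulation (Huang et al.), used to convert the non-convex penalized
objective (Eq. 4) into the augmented objective (Eq. 6).  The coordinates of `γ : Fin K → ℝ`
are partitioned into `m` groups via `gr : Fin K → Fin m`; `bn γ j` is the ℓ₁ norm of the
`j`-th block.  With `F γ = Q γ + λ₁ ∑ j, c j * (bn γ j)^ν` and
`G γ θ = Q γ + ∑ j, (θ j)^(1-1/ν) (c j)^(1/ν) (bn γ j) + τ ∑ j, θ j`: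
(i) for every `γ` with all block norms positive, `F γ` is the attained infimum of
`G γ ·` over `θ ∈ (0,∞)^m`; (ii) if `(γ̂, θ̂)` minimizes `G` over pairs with all blocks
nonzero (and `θ` positive), then `γ̂` minimizes `F` over `γ` with all blocks nonzero. -/
theorem group_bridge_reformulation
    {K m : ℕ} (gr : Fin K → Fin m) (c : Fin m → ℝ) (hc : ∀ j, 0 < c j)
    (ν lam₁ τ : ℝ) (hν : ν ∈ Set.Ioo (0 : ℝ) 1) (hlam₁ : 0 < lam₁)
    (hτ : τ = (lam₁ * ν ^ ν * (1 - ν) ^ (1 - ν)) ^ ((1 : ℝ) / (1 - ν)))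
    (Q : (Fin K → ℝ) → ℝ)
    (bn : (Fin K → ℝ) → Fin m → ℝ)
    (hbn : ∀ γ j, bn γ j = ∑ i ∈ Finset.univ.filter (fun i => gr i = j), |γ i|)
    (F : (Fin K → ℝ) → ℝ)
    (hF : ∀ γ, F γ = Q γ + lam₁ * ∑ j, c j * (bn γ j) ^ ν)
    (G : (Fin K → ℝ) → (Fin m → ℝ) → ℝ)
    (hG : ∀ γ θ, G γ θ =
      Q γ + ∑ j, (θ j) ^ (1 - 1 / ν) * (c j) ^ ((1 : ℝ) / ν) * bn γ j + τ * ∑ j, θ j) :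
    (∀ γ : Fin K → ℝ, (∀ j, 0 < bn γ j) →
      IsLeast ((fun θ => G γ θ) '' {θ : Fin m → ℝ | ∀ j, 0 < θ j}) (F γ)) ∧
    (∀ (γhat : Fin K → ℝ) (θhat : Fin m → ℝ),
      (∀ j, bn γhat j ≠ 0) → (∀ j, 0 < θhat j) →
      (∀ (γ : Fin K → ℝ) (θ : Fin m → ℝ),
        (∀ j, bn γ j ≠ 0) → (∀ j, 0 < θ j) → G γhat θhat ≤ G γ θ) →
      ∀ γ : Fin K → ℝ, (∀ j, bn γ j ≠ 0) → F γhat ≤ F γ) := by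
  obtain ⟨hν0, hν1⟩ := hν
  have inf_eq : ∀ γ, (∀ j, 0 < bn γ j) →
      IsLeast ((fun θ => G γ θ) '' {θ : Fin m → ℝ | ∀ j, 0 < θ j}) (F γ) := by
    intro γ hγ
    have h := (monotone_id.const_add (Q γ)).map_isLeast (isLeast_image_pi_sum fun j =>
      isLeast_bridge_penalty hν0 hν1 hlam₁ hτ (hc j) (hγ j))
    rw [image_image] at h
    have hpos : {θ : Fin m → ℝ | ∀ j, 0 < θ j} = univ.pi fun _ => Ioi 0 := by ext; simp
    simpa only [hG, hF, hpos, id_eq, Finset.mul_sum, Finset.sum_add_distrib, add_assoc] using h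
  have bn_pos : ∀ γ, (∀ j, bn γ j ≠ 0) → ∀ j, 0 < bn γ j := fun γ h j =>
    (hbn γ j ▸ Finset.sum_nonneg fun i _ => abs_nonneg (γ i)).lt_of_ne' (h j)
  refine ⟨inf_eq, fun γhat θhat hγhat hθhat hmin => ?_⟩
  refine isMinOn_iff.1 (IsMinOn.of_uncurry_of_isLeast (s := {γ | ∀ j, bn γ j ≠ 0})
    (fun γ h => inf_eq γ (bn_pos γ h)) hγhat hθhat (isMinOn_iff.2 ?_))
  rintro ⟨γ, θ⟩ ⟨hγ, hθ⟩
  exact hmin γ θ hγ hθ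
end

section
/- Let Ψ be a real N×K matrix, R a symmetric positive semidefinite K×K real matrix, λ₂ ≥ 0, and suppose the smallest eigenvalue ρ_min of M = ΨᵀΨ + λ₂R is strictly positive. Let γ* ∈ ℝ^K, let ε : Ω → ℝ^N be a random vector on a probability space with independent coordinates, each square-integrable with mean zero and variance σ² < ∞, and define the random ridge estimator b = M⁻¹Ψᵀ(Ψγ* + ε). Then E‖b − γ*‖₂² ≤ 2 ρ_min^{−2} ( λ₂² ‖Rγ*‖₂² + σ² ‖Ψ‖_F² ). -/
/-! With `M = ΨᵀΨ + λ₂R`, the estimation error is `b − γ* = M⁻¹(Ψᵀε − λ₂Rγ*)`. Diagonalising `M`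
in an orthonormal eigenbasis gives `‖Mv‖ ≥ ρ_min ‖v‖`, hence `‖M⁻¹x‖² ≤ ‖x‖² / ρ_min²`, and
`‖u − w‖² ≤ 2‖u‖² + 2‖w‖²` separates the bias `λ₂Rγ*` from the noise `Ψᵀε`. Independent mean-zero
coordinates are uncorrelated, so `E‖Ψᵀε‖² = σ² ‖Ψ‖_F²`. -/

open Matrix MeasureTheory ProbabilityTheory

theorem sub_dotProduct_sub_le {n : Type*} [Fintype n] (a c : n → ℝ) :
    (a - c) ⬝ᵥ (a - c) ≤ 2 * (a ⬝ᵥ a) + 2 * (c ⬝ᵥ c) := by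
  have h := dotProduct_self_star_nonneg (a + c)
  simp only [star_trivial, add_dotProduct, dotProduct_add, sub_dotProduct, dotProduct_sub,
    dotProduct_comm c a] at h ⊢
  linarith

namespace Matrix

variable {n : Type*} [Fintype n] [DecidableEq n]

theorem dotProduct_self_mulVec_of_mem_orthogonalGroup {U : Matrix n n ℝ}
    (hU : U ∈ orthogonalGroup n ℝ) (x : n → ℝ) : (U *ᵥ x) ⬝ᵥ (U *ᵥ x) = x ⬝ᵥ x := by
  rw [dotProduct_mulVec, ← mulVec_transpose, mulVec_mulVec, (mem_orthogonalGroup_iff' n ℝ).1 hU,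
    one_mulVec]

theorem IsHermitian.sq_mul_dotProduct_self_le {M : Matrix n n ℝ} (hM : M.IsHermitian) {ρ : ℝ}
    (hρ₀ : 0 ≤ ρ) (hρ : ∀ i, ρ ≤ hM.eigenvalues i) (v : n → ℝ) :
    ρ ^ 2 * (v ⬝ᵥ v) ≤ (M *ᵥ v) ⬝ᵥ (M *ᵥ v) := by
  set U : Matrix n n ℝ := (hM.eigenvectorUnitary : Matrix n n ℝ)
  have hU : U ∈ orthogonalGroup n ℝ := hM.eigenvectorUnitary.2
  have hU' : star U ∈ orthogonalGroup n ℝ := Unitary.star_mem hU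
  set w := star U *ᵥ v
  have hMv : M *ᵥ v = U *ᵥ fun i => hM.eigenvalues i * w i := by
    conv_lhs => rw [hM.spectral_theorem]
    rw [Unitary.conjStarAlgAut_apply, ← mulVec_mulVec, ← mulVec_mulVec]
    congr 1
    ext i
    simp [mulVec_diagonal, w, U]
  rw [hMv, dotProduct_self_mulVec_of_mem_orthogonalGroup hU,
    ← dotProduct_self_mulVec_of_mem_orthogonalGroup hU' v]
  simp only [dotProduct, Finset.mul_sum]
  refine Finset.sum_le_sum fun i _ => ?_
  rw [mul_mul_mul_comm, ← sq (hM.eigenvalues i)]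
  exact mul_le_mul_of_nonneg_right (pow_le_pow_left₀ hρ₀ (hρ i) 2) (mul_self_nonneg _)

theorem IsHermitian.isUnit_det_of_pos_le_eigenvalues {M : Matrix n n ℝ} (hM : M.IsHermitian)
    {ρ : ℝ} (hρpos : 0 < ρ) (hρ : ∀ i, ρ ≤ hM.eigenvalues i) : IsUnit M.det :=
  (isUnit_iff_isUnit_det M).1
    ((hM.posDef_iff_eigenvalues_pos.2 fun i => hρpos.trans_le (hρ i)).isUnit)

theorem IsHermitian.inv_mulVec_dotProduct_self_le {M : Matrix n n ℝ} (hM : M.IsHermitian)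
    {ρ : ℝ} (hρpos : 0 < ρ) (hρ : ∀ i, ρ ≤ hM.eigenvalues i) (x : n → ℝ) :
    (M⁻¹ *ᵥ x) ⬝ᵥ (M⁻¹ *ᵥ x) ≤ (x ⬝ᵥ x) / ρ ^ 2 := by
  rw [le_div_iff₀ (by positivity), mul_comm]
  simpa [mulVec_mulVec, mul_nonsing_inv _ (hM.isUnit_det_of_pos_le_eigenvalues hρpos hρ)]
    using hM.sq_mul_dotProduct_self_le hρpos.le hρ (M⁻¹ *ᵥ x)

end Matrix

theorem ridge_sub_eq {m n K : Type*} [Fintype m] [Fintype n] [DecidableEq n] [CommRing K]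
    (Ψ : Matrix m n K) (R : Matrix n n K) (lam : K) (hM : IsUnit (Ψᵀ * Ψ + lam • R).det)
    (γ : n → K) (e : m → K) :
    (Ψᵀ * Ψ + lam • R)⁻¹ *ᵥ (Ψᵀ *ᵥ (Ψ *ᵥ γ + e)) - γ =
      (Ψᵀ * Ψ + lam • R)⁻¹ *ᵥ (Ψᵀ *ᵥ e - lam • (R *ᵥ γ)) := by
  have h : Ψᵀ *ᵥ (Ψ *ᵥ γ + e) = (Ψᵀ * Ψ + lam • R) *ᵥ γ + (Ψᵀ *ᵥ e - lam • (R *ᵥ γ)) := by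
    rw [mulVec_add, mulVec_mulVec, add_mulVec, smul_mulVec]
    abel
  rw [h, mulVec_add, mulVec_mulVec, nonsing_inv_mul _ hM, one_mulVec, add_sub_cancel_left]

theorem ridge_sub_dotProduct_self_le {m n : Type*} [Fintype m] [Fintype n] [DecidableEq n]
    (Ψ : Matrix m n ℝ) (R : Matrix n n ℝ) (lam : ℝ) (hM : (Ψᵀ * Ψ + lam • R).IsHermitian)
    {ρ : ℝ} (hρpos : 0 < ρ) (hρ : ∀ i, ρ ≤ hM.eigenvalues i) (γ : n → ℝ) (e : m → ℝ) :
    let d := (Ψᵀ * Ψ + lam • R)⁻¹ *ᵥ (Ψᵀ *ᵥ (Ψ *ᵥ γ + e)) - γ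
    d ⬝ᵥ d ≤ 2 / ρ ^ 2 * (lam ^ 2 * ((R *ᵥ γ) ⬝ᵥ (R *ᵥ γ)) + (Ψᵀ *ᵥ e) ⬝ᵥ (Ψᵀ *ᵥ e)) := by
  rw [ridge_sub_eq Ψ R lam (hM.isUnit_det_of_pos_le_eigenvalues hρpos hρ)]
  refine (hM.inv_mulVec_dotProduct_self_le hρpos hρ _).trans ?_
  have hsub := sub_dotProduct_sub_le (Ψᵀ *ᵥ e) (lam • (R *ᵥ γ))
  rw [smul_dotProduct, dotProduct_smul, smul_eq_mul, smul_eq_mul] at hsub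
  rw [div_mul_eq_mul_div, div_le_div_iff_of_pos_right (by positivity)]
  linarith

section Noise

variable {Ω ι : Type*} [MeasurableSpace Ω] {P : Measure Ω} {ε : ι → Ω → ℝ} {σ : ℝ}

theorem integral_mul_eq_ite_of_iIndepFun [DecidableEq ι] (hindep : iIndepFun ε P)
    (hL2 : ∀ i, MemLp (ε i) 2 P) (hmean : ∀ i, ∫ ω, ε i ω ∂P = 0)
    (hvar : ∀ i, ∫ ω, ε i ω ^ 2 ∂P = σ ^ 2) (i j : ι) :
    ∫ ω, ε i ω * ε j ω ∂P = if i = j then σ ^ 2 else 0 := by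
  rcases eq_or_ne i j with rfl | hij
  · rw [if_pos rfl, ← hvar i]
    simp only [sq]
  · rw [if_neg hij]
    simpa [hmean i] using (hindep.indepFun hij).integral_mul_eq_mul_integral
      (hL2 i).aestronglyMeasurable (hL2 j).aestronglyMeasurable

variable [Fintype ι]

theorem memLp_sum_mul (hL2 : ∀ i, MemLp (ε i) 2 P) (a : ι → ℝ) :
    MemLp (fun ω => ∑ i, a i * ε i ω) 2 P :=
  memLp_finsetSum _ fun i _ => (hL2 i).const_mul (a i)

theorem integrable_mulVec_dotProduct_self {κ : Type*} [Fintype κ] (hL2 : ∀ i, MemLp (ε i) 2 P)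
    (A : Matrix κ ι ℝ) :
    Integrable (fun ω => (A *ᵥ fun i => ε i ω) ⬝ᵥ (A *ᵥ fun i => ε i ω)) P := by
  simp only [dotProduct, mulVec, ← sq]
  exact integrable_finsetSum _ fun k _ => (memLp_sum_mul hL2 (A k)).integrable_sq

variable [DecidableEq ι]

theorem integral_sum_mul_sq (hL2 : ∀ i, MemLp (ε i) 2 P)
    (hcov : ∀ i j, ∫ ω, ε i ω * ε j ω ∂P = if i = j then σ ^ 2 else 0) (a : ι → ℝ) :
    ∫ ω, (∑ i, a i * ε i ω) ^ 2 ∂P = σ ^ 2 * ∑ i, a i ^ 2 := by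
  have hint : ∀ i j, Integrable (fun ω => a i * a j * (ε i ω * ε j ω)) P := fun i j =>
    ((hL2 i).integrable_mul (hL2 j)).const_mul _
  have hexpand : ∀ ω, (∑ i, a i * ε i ω) ^ 2 = ∑ i, ∑ j, a i * a j * (ε i ω * ε j ω) := by
    intro ω
    rw [sq, Finset.sum_mul_sum]
    exact Finset.sum_congr rfl fun i _ => Finset.sum_congr rfl fun j _ => by ring
  simp_rw [hexpand]
  rw [integral_finsetSum _ fun i _ => integrable_finsetSum _ fun j _ => hint i j]
  simp_rw [integral_finsetSum _ fun j _ => hint _ j, integral_const_mul, hcov]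
  simp [Finset.mul_sum, sq, mul_comm]

theorem integral_mulVec_dotProduct_self {κ : Type*} [Fintype κ] (hL2 : ∀ i, MemLp (ε i) 2 P)
    (hcov : ∀ i j, ∫ ω, ε i ω * ε j ω ∂P = if i = j then σ ^ 2 else 0) (A : Matrix κ ι ℝ) :
    ∫ ω, (A *ᵥ fun i => ε i ω) ⬝ᵥ (A *ᵥ fun i => ε i ω) ∂P = σ ^ 2 * ∑ k, ∑ i, A k i ^ 2 := by
  simp only [dotProduct, mulVec, ← sq]
  rw [integral_finsetSum _ fun k _ => (memLp_sum_mul hL2 (A k)).integrable_sq, Finset.mul_sum]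
  exact Finset.sum_congr rfl fun k _ => integral_sum_mul_sq hL2 hcov (A k)

end Noise

theorem ridge_mse_bound_general
    {Ω : Type*} [MeasurableSpace Ω] (P : Measure Ω) [IsProbabilityMeasure P]
    {N K : ℕ} (Ψ : Matrix (Fin N) (Fin K) ℝ) (R : Matrix (Fin K) (Fin K) ℝ)
    (lam₂ : ℝ)
    (hM : (Ψᵀ * Ψ + lam₂ • R).IsHermitian)
    (ρmin : ℝ) (hρ : IsLeast (Set.range hM.eigenvalues) ρmin) (hρpos : 0 < ρmin)
    (γstar : Fin K → ℝ) (σ : ℝ) (ε : Fin N → Ω → ℝ)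
    (hindep : iIndepFun ε P)
    (hL2 : ∀ i, MemLp (ε i) 2 P)
    (hmean : ∀ i, ∫ ω, ε i ω ∂P = 0)
    (hvar : ∀ i, ∫ ω, (ε i ω) ^ 2 ∂P = σ ^ 2)
    (b : Ω → Fin K → ℝ)
    (hb : ∀ ω, b ω = ((Ψᵀ * Ψ + lam₂ • R)⁻¹).mulVec
      (Ψᵀ.mulVec (Ψ.mulVec γstar + fun i => ε i ω))) :
    ∫ ω, (b ω - γstar) ⬝ᵥ (b ω - γstar) ∂P ≤
      2 / ρmin ^ 2 *
        (lam₂ ^ 2 * (R.mulVec γstar ⬝ᵥ R.mulVec γstar) + σ ^ 2 * ∑ i, ∑ j, (Ψ i j) ^ 2) := by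
  have hρle : ∀ k, ρmin ≤ hM.eigenvalues k := fun k => hρ.2 ⟨k, rfl⟩
  have hnoise_int := integrable_mulVec_dotProduct_self hL2 Ψᵀ
  have hnoise := integral_mulVec_dotProduct_self hL2
    (integral_mul_eq_ite_of_iIndepFun hindep hL2 hmean hvar) Ψᵀ
  calc ∫ ω, (b ω - γstar) ⬝ᵥ (b ω - γstar) ∂P
      ≤ ∫ ω, 2 / ρmin ^ 2 * (lam₂ ^ 2 * ((R *ᵥ γstar) ⬝ᵥ (R *ᵥ γstar)) +
          (Ψᵀ *ᵥ fun i => ε i ω) ⬝ᵥ (Ψᵀ *ᵥ fun i => ε i ω)) ∂P := by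
        refine integral_mono_of_nonneg (.of_forall fun ω => ?_)
          (((integrable_const _).add hnoise_int).const_mul _) (.of_forall fun ω => ?_)
        · exact dotProduct_self_star_nonneg _
        · dsimp only
          rw [hb ω]
          exact ridge_sub_dotProduct_self_le Ψ R lam₂ hM hρpos hρle γstar _
    _ = _ := by
        rw [integral_const_mul, integral_add (integrable_const _) hnoise_int, integral_const,
          hnoise, Finset.sum_comm]
        simp

/-- Mean-squared-error bound for the ridge part of the estimator (proof of Theorem 1):
with `M = ΨᵀΨ + λ₂R` symmetric with smallest eigenvalue `ρ_min > 0`, `R` positive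
semidefinite, and noise `ε` with independent square-integrable mean-zero coordinates of
variance `σ²`, the ridge estimator `b = M⁻¹Ψᵀ(Ψγ* + ε)` satisfies
`E‖b − γ*‖₂² ≤ 2 ρ_min⁻² (λ₂² ‖Rγ*‖₂² + σ² ‖Ψ‖_F²)`. -/
theorem ridge_mse_bound
    {Ω : Type*} [MeasurableSpace Ω] (P : Measure Ω) [IsProbabilityMeasure P]
    {N K : ℕ} (Ψ : Matrix (Fin N) (Fin K) ℝ) (R : Matrix (Fin K) (Fin K) ℝ)
    (hR : R.PosSemidef) (lam₂ : ℝ) (hlam₂ : 0 ≤ lam₂)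
    (hM : (Ψᵀ * Ψ + lam₂ • R).IsHermitian)
    (ρmin : ℝ) (hρ : IsLeast (Set.range hM.eigenvalues) ρmin) (hρpos : 0 < ρmin)
    (γstar : Fin K → ℝ) (σ : ℝ) (ε : Fin N → Ω → ℝ)
    (hmeas : ∀ i, Measurable (ε i))
    (hindep : iIndepFun ε P)
    (hL2 : ∀ i, MemLp (ε i) 2 P)
    (hmean : ∀ i, ∫ ω, ε i ω ∂P = 0)
    (hvar : ∀ i, ∫ ω, (ε i ω) ^ 2 ∂P = σ ^ 2)
    (b : Ω → Fin K → ℝ)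
    (hb : ∀ ω, b ω = ((Ψᵀ * Ψ + lam₂ • R)⁻¹).mulVec
      (Ψᵀ.mulVec (Ψ.mulVec γstar + fun i => ε i ω))) :
    ∫ ω, (b ω - γstar) ⬝ᵥ (b ω - γstar) ∂P ≤
      2 / ρmin ^ 2 *
        (lam₂ ^ 2 * (R.mulVec γstar ⬝ᵥ R.mulVec γstar) + σ ^ 2 * ∑ i, ∑ j, (Ψ i j) ^ 2) :=
  ridge_mse_bound_general P Ψ R lam₂ hM ρmin hρ hρpos γstar σ ε hindep hL2 hmean hvar b hb
end

section
/- Fix a design matrix Ψ ∈ ℝ^{N×K}, a partition of the K coordinates into S groups with blocks γ_g of sizes d_g, weights c_g > 0, ν ∈ (0,1), λ₁ ≥ 0, λ₂ ≥ 0, and a symmetric positive semidefinite R ∈ ℝ^{K×K}; for y ∈ ℝ^N define L_y(γ) = ‖y − Ψγ‖₂² + λ₁ Σ_{g=1}^S c_g ‖γ_g‖₁^ν + λ₂ γᵀRγ. Assume the smallest eigenvalue ρ_min of M = ΨᵀΨ + λ₂R is strictly positive and let b = M⁻¹Ψᵀy be the ridge estimator. If γ̂ minimizes L_y over ℝ^K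 and every block b_g of b is nonzero, then ‖γ̂ − b‖₂ ≤ (2λ₁/ρ_min) · ( Σ_{g=1}^S d_g c_g² ‖b_g‖₁^{2(ν−1)} )^{1/2}. -/
/-!
Put `u = γ̂ - b` and `M = ΨᵀΨ + λ₂R`. The smooth part of `L` equals
`yᵀy + γᵀMγ - 2γᵀΨᵀy`; since `Mb = Ψᵀy` its value at `b + u` exceeds its value at `b` by
exactly `uᵀMu ≥ ρ_min ‖u‖²`, so minimality of `γ̂` gives `ρ_min ‖u‖² ≤ λ₁ (P(b) - P(γ̂))`
for the penalty `P`. On each group, concavity of `t ↦ t^ν` and the reverse triangle inequality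
give `‖b_g‖₁^ν - ‖γ̂_g‖₁^ν ≤ ‖b_g‖₁^(ν-1) ‖u_g‖₁ ≤ ‖b_g‖₁^(ν-1) √d_g ‖u_g‖₂`, and
Cauchy–Schwarz over the groups bounds `P(b) - P(γ̂)` by `T ‖u‖`, where `T` is the square root
in the claim. Hence `ρ_min ‖u‖² ≤ λ₁ T ‖u‖`, i.e. `‖u‖ ≤ λ₁ T / ρ_min`.
-/

open Matrix Finset

namespace Matrix

variable {ι : Type*} [Fintype ι]

open scoped MatrixOrder in
lemma IsHermitian.mul_dotProduct_self_le_dotProduct_mulVec [DecidableEq ι]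
    {A : Matrix ι ι ℝ} (hA : A.IsHermitian) {ρ : ℝ} (hρ : ∀ i, ρ ≤ hA.eigenvalues i)
    (x : ι → ℝ) : ρ * (x ⬝ᵥ x) ≤ x ⬝ᵥ A *ᵥ x := by
  have hle : algebraMap ℝ (Matrix ι ι ℝ) ρ ≤ A := by
    rw [algebraMap_le_iff_le_spectrum hA, hA.spectrum_real_eq_range_eigenvalues]
    rintro _ ⟨i, rfl⟩
    exact hρ i
  simpa [sub_mulVec, Algebra.algebraMap_eq_smul_one, smul_mulVec, dotProduct_smul] using
    (le_iff.mp hle).dotProduct_mulVec_nonneg x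

variable {α : Type*} [CommRing α]

lemma IsSymm.dotProduct_mulVec_add_sub_two_mul {M : Matrix ι ι α} (hM : M.IsSymm)
    {b v : ι → α} (hb : M *ᵥ b = v) (u : ι → α) :
    (b + u) ⬝ᵥ M *ᵥ (b + u) - 2 * ((b + u) ⬝ᵥ v) =
      b ⬝ᵥ M *ᵥ b - 2 * (b ⬝ᵥ v) + u ⬝ᵥ M *ᵥ u := by
  have hcross : b ⬝ᵥ M *ᵥ u = u ⬝ᵥ v := by
    rw [dotProduct_mulVec, ← mulVec_transpose, hM.eq, hb, dotProduct_comm]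
  simp only [mulVec_add, add_dotProduct, dotProduct_add, hb, hcross]
  ring

lemma sub_mulVec_dotProduct_add_ridge {m : Type*} [Fintype m] (Ψ : Matrix m ι α) (y : m → α)
    (lam : α) (R : Matrix ι ι α) (γ : ι → α) :
    (y - Ψ *ᵥ γ) ⬝ᵥ (y - Ψ *ᵥ γ) + lam * (γ ⬝ᵥ R *ᵥ γ) =
      y ⬝ᵥ y + (γ ⬝ᵥ (Ψᵀ * Ψ + lam • R) *ᵥ γ - 2 * (γ ⬝ᵥ Ψᵀ *ᵥ y)) := by
  have hΨ : γ ⬝ᵥ (Ψᵀ * Ψ) *ᵥ γ = (Ψ *ᵥ γ) ⬝ᵥ (Ψ *ᵥ γ) := by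
    rw [← mulVec_mulVec, dotProduct_mulVec, vecMul_transpose]
  have hy : γ ⬝ᵥ Ψᵀ *ᵥ y = y ⬝ᵥ Ψ *ᵥ γ := by
    rw [dotProduct_mulVec, vecMul_transpose, dotProduct_comm]
  rw [add_mulVec, dotProduct_add, hΨ, smul_mulVec, dotProduct_smul, smul_eq_mul, hy,
    sub_dotProduct, dotProduct_sub, dotProduct_sub, dotProduct_comm (Ψ *ᵥ γ) y]
  ring

end Matrix

lemma Real.rpow_sub_rpow_le_rpow_sub_one_mul_abs {ν t s : ℝ} (hν₀ : 0 ≤ ν) (hν₁ : ν ≤ 1)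
    (ht : 0 < t) (hs : 0 ≤ s) : t ^ ν - s ^ ν ≤ t ^ (ν - 1) * |t - s| := by
  have htt : t ^ (ν - 1) * t = t ^ ν := by
    rw [← Real.rpow_add_one ht.ne', sub_add_cancel]
  rcases le_or_gt s t with hst | hts
  · rw [abs_of_nonneg (sub_nonneg.mpr hst), mul_sub, htt, sub_le_sub_iff_left]
    rcases hs.eq_or_lt with rfl | hs
    · simpa using Real.rpow_nonneg le_rfl ν
    calc t ^ (ν - 1) * s ≤ s ^ (ν - 1) * s :=
          mul_le_mul_of_nonneg_right (Real.rpow_le_rpow_of_nonpos hs hst (by linarith)) hs.le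
      _ = s ^ ν := by rw [← Real.rpow_add_one hs.ne', sub_add_cancel]
  · have : t ^ ν ≤ s ^ ν := Real.rpow_le_rpow ht.le hts.le hν₀
    have : 0 ≤ t ^ (ν - 1) * |t - s| := by positivity
    linarith

lemma abs_sum_abs_sub_sum_abs_le {ι : Type*} (s : Finset ι) (a b : ι → ℝ) :
    |(∑ i ∈ s, |a i|) - (∑ i ∈ s, |b i|)| ≤ ∑ i ∈ s, |a i - b i| := by
  rw [← sum_sub_distrib]
  exact (abs_sum_le_sum_abs _ _).trans (sum_le_sum fun i _ => abs_abs_sub_abs_le_abs_sub _ _)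

lemma sum_abs_le_sqrt_card_mul_sqrt_sum_sq {ι : Type*} (s : Finset ι) (f : ι → ℝ) :
    ∑ i ∈ s, |f i| ≤ √(#s : ℝ) * √(∑ i ∈ s, f i ^ 2) := by
  rw [← Real.sqrt_mul (Nat.cast_nonneg _)]
  refine Real.le_sqrt_of_sq_le ?_
  simpa only [sq_abs] using sq_sum_le_card_mul_sum_sq (s := s) (f := fun i => |f i|)

section GroupNorms

variable {ι κ : Type*} [Fintype ι] [Fintype κ] [DecidableEq κ] (gr : ι → κ)

lemma sum_mul_sum_abs_fiber_le (w : κ → ℝ) (hw : ∀ g, 0 ≤ w g) (u : ι → ℝ) :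
    ∑ g, w g * ∑ i with gr i = g, |u i| ≤
      √(∑ g, (#{i | gr i = g} : ℝ) * w g ^ 2) * √(u ⬝ᵥ u) := by
  set q : κ → ℝ := fun g => ∑ i with gr i = g, u i ^ 2
  have hq : ∑ g, q g = u ⬝ᵥ u := by
    simp only [q, sum_fiberwise, dotProduct, sq]
  calc ∑ g, w g * ∑ i with gr i = g, |u i|
      ≤ ∑ g, (w g * √(#{i | gr i = g} : ℝ)) * √(q g) := sum_le_sum fun g _ => by
        rw [mul_assoc]
        exact mul_le_mul_of_nonneg_left (sum_abs_le_sqrt_card_mul_sqrt_sum_sq _ u) (hw g)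
    _ ≤ √(∑ g, (w g * √(#{i | gr i = g} : ℝ)) ^ 2) * √(∑ g, √(q g) ^ 2) :=
        Real.sum_mul_le_sqrt_mul_sqrt _ _ _
    _ = √(∑ g, (#{i | gr i = g} : ℝ) * w g ^ 2) * √(u ⬝ᵥ u) := by
        congr 2
        · exact sum_congr rfl fun g _ => by rw [mul_pow, Real.sq_sqrt (Nat.cast_nonneg _), mul_comm]
        · rw [← hq]
          exact sum_congr rfl fun g _ => Real.sq_sqrt (sum_nonneg fun i _ => sq_nonneg _)

lemma group_bridge_penalty_sub_le (c : κ → ℝ) (hc : ∀ g, 0 ≤ c g) {ν : ℝ} (hν₀ : 0 ≤ ν)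
    (hν₁ : ν ≤ 1) (b γ : ι → ℝ) (hb : ∀ g, 0 < ∑ i with gr i = g, |b i|) :
    ∑ g, c g * (∑ i with gr i = g, |b i|) ^ ν - ∑ g, c g * (∑ i with gr i = g, |γ i|) ^ ν ≤
      √(∑ g, (#{i | gr i = g} : ℝ) * c g ^ 2 * (∑ i with gr i = g, |b i|) ^ (2 * (ν - 1))) *
        √((γ - b) ⬝ᵥ (γ - b)) := by
  set tb : κ → ℝ := fun g => ∑ i with gr i = g, |b i|
  calc ∑ g, c g * tb g ^ ν - ∑ g, c g * (∑ i with gr i = g, |γ i|) ^ ν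
      = ∑ g, c g * (tb g ^ ν - (∑ i with gr i = g, |γ i|) ^ ν) := by
        simp only [mul_sub, sum_sub_distrib]
    _ ≤ ∑ g, (c g * tb g ^ (ν - 1)) * ∑ i with gr i = g, |(γ - b) i| := sum_le_sum fun g _ => by
        have hdiff : |tb g - (∑ i with gr i = g, |γ i|)| ≤ ∑ i with gr i = g, |(γ - b) i| := by
          simpa only [Pi.sub_apply, abs_sub_comm] using abs_sum_abs_sub_sum_abs_le _ b γ
        rw [mul_assoc]
        refine mul_le_mul_of_nonneg_left ?_ (hc g)
        exact (Real.rpow_sub_rpow_le_rpow_sub_one_mul_abs hν₀ hν₁ (hb g)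
          (sum_nonneg fun i _ => abs_nonneg _)).trans
          (mul_le_mul_of_nonneg_left hdiff (Real.rpow_nonneg (hb g).le _))
    _ ≤ √(∑ g, (#{i | gr i = g} : ℝ) * (c g * tb g ^ (ν - 1)) ^ 2) * √((γ - b) ⬝ᵥ (γ - b)) :=
        sum_mul_sum_abs_fiber_le gr _ (fun g => mul_nonneg (hc g) (Real.rpow_nonneg (hb g).le _)) _
    _ = √(∑ g, (#{i | gr i = g} : ℝ) * c g ^ 2 * tb g ^ (2 * (ν - 1))) *
          √((γ - b) ⬝ᵥ (γ - b)) := by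
        congr 2
        refine sum_congr rfl fun g _ => ?_
        rw [mul_pow, ← Real.rpow_mul_natCast (hb g).le, mul_comm (ν - 1)]
        push_cast
        ring

end GroupNorms

lemma le_div_of_mul_sq_le_mul {ρ a x : ℝ} (hρ : 0 < ρ) (ha : 0 ≤ a) (hx : 0 ≤ x)
    (h : ρ * x ^ 2 ≤ a * x) : x ≤ a / ρ := by
  rw [le_div_iff₀ hρ]
  rcases hx.eq_or_lt with rfl | hx
  · simpa using ha
  · exact le_of_mul_le_mul_right (by linarith) hx

theorem group_bridge_proximity_to_ridge_general
    {N K S : ℕ} (Ψ : Matrix (Fin N) (Fin K) ℝ) (y : Fin N → ℝ)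
    (gr : Fin K → Fin S) (c : Fin S → ℝ) (hc : ∀ g, 0 < c g)
    (ν : ℝ) (hν : ν ∈ Set.Ioo (0 : ℝ) 1)
    (lam₁ : ℝ) (hlam₁ : 0 ≤ lam₁) (lam₂ : ℝ)
    (R : Matrix (Fin K) (Fin K) ℝ)
    (hM : (Ψᵀ * Ψ + lam₂ • R).IsHermitian)
    (ρmin : ℝ) (hρ : IsLeast (Set.range hM.eigenvalues) ρmin) (hρpos : 0 < ρmin)
    (b : Fin K → ℝ)
    (hb : b = ((Ψᵀ * Ψ + lam₂ • R)⁻¹).mulVec (Ψᵀ.mulVec y))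
    (L : (Fin K → ℝ) → ℝ)
    (hL : ∀ γ, L γ = (y - Ψ.mulVec γ) ⬝ᵥ (y - Ψ.mulVec γ) +
      lam₁ * ∑ g, c g * (∑ i ∈ Finset.univ.filter (fun i => gr i = g), |γ i|) ^ ν +
      lam₂ * (γ ⬝ᵥ R.mulVec γ))
    (γhat : Fin K → ℝ) (hmin : ∀ γ, L γhat ≤ L γ)
    (hbnz : ∀ g, 0 < ∑ i ∈ Finset.univ.filter (fun i => gr i = g), |b i|) :
    Real.sqrt ((γhat - b) ⬝ᵥ (γhat - b)) ≤
      2 * lam₁ / ρmin *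
        Real.sqrt (∑ g, ((Finset.univ.filter (fun i => gr i = g)).card : ℝ) * (c g) ^ 2 *
          (∑ i ∈ Finset.univ.filter (fun i => gr i = g), |b i|) ^ (2 * (ν - 1))) := by
  set M := Ψᵀ * Ψ + lam₂ • R
  set u := γhat - b
  set T := Real.sqrt (∑ g, ((Finset.univ.filter (fun i => gr i = g)).card : ℝ) * (c g) ^ 2 *
    (∑ i ∈ Finset.univ.filter (fun i => gr i = g), |b i|) ^ (2 * (ν - 1)))
  have hρM : ∀ i, ρmin ≤ hM.eigenvalues i := fun i => hρ.2 ⟨i, rfl⟩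
  have hMb : M *ᵥ b = Ψᵀ *ᵥ y := by
    have hMunit := (hM.posDef_iff_eigenvalues_pos.mpr fun i => hρpos.trans_le (hρM i)).isUnit
    rw [hb, mulVec_mulVec, mul_nonsing_inv _ ((isUnit_iff_isUnit_det _).mp hMunit), one_mulVec]
  have hexcess : u ⬝ᵥ M *ᵥ u ≤ lam₁ * (∑ g, c g * (∑ i with gr i = g, |b i|) ^ ν -
      ∑ g, c g * (∑ i with gr i = g, |γhat i|) ^ ν) := by
    have hsq := (isHermitian_iff_isSymm.mp hM).dotProduct_mulVec_add_sub_two_mul hMb u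
    rw [add_sub_cancel] at hsq
    have hopt := hmin b
    rw [hL, hL] at hopt
    linarith [sub_mulVec_dotProduct_add_ridge Ψ y lam₂ R γhat,
      sub_mulVec_dotProduct_add_ridge Ψ y lam₂ R b]
  have hpen := group_bridge_penalty_sub_le gr c (fun g => (hc g).le) hν.1.le hν.2.le b γhat hbnz
  have hquad : ρmin * √(u ⬝ᵥ u) ^ 2 ≤ lam₁ * T * √(u ⬝ᵥ u) := by
    have huu : 0 ≤ u ⬝ᵥ u := dotProduct_self_star_nonneg u
    rw [Real.sq_sqrt huu, mul_assoc]
    exact (hM.mul_dotProduct_self_le_dotProduct_mulVec hρM u).trans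
      (hexcess.trans (mul_le_mul_of_nonneg_left hpen hlam₁))
  calc √(u ⬝ᵥ u) ≤ lam₁ * T / ρmin :=
        le_div_of_mul_sq_le_mul hρpos (mul_nonneg hlam₁ (Real.sqrt_nonneg _))
          (Real.sqrt_nonneg _) hquad
    _ ≤ 2 * lam₁ / ρmin * T := by
        rw [mul_div_right_comm]
        exact mul_le_mul_of_nonneg_right (div_le_div_of_nonneg_right (by linarith) hρpos.le)
          (Real.sqrt_nonneg _)

/-- Deterministic proximity bound between the group-bridge-penalized minimizer and the
ridge estimator (first step of the proof of Theorem 1): if `γ̂` minimizes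
`L(γ) = ‖y − Ψγ‖₂² + λ₁ ∑ g c_g ‖γ_g‖₁^ν + λ₂ γᵀRγ` and every block of the ridge
estimator `b = (ΨᵀΨ + λ₂R)⁻¹Ψᵀy` is nonzero, then
`‖γ̂ − b‖₂ ≤ (2λ₁/ρ_min) (∑ g d_g c_g² ‖b_g‖₁^{2(ν−1)})^{1/2}`,
where `ρ_min > 0` is the smallest eigenvalue of `M = ΨᵀΨ + λ₂R` and `d_g` is the size of
group `g`. -/
theorem group_bridge_proximity_to_ridge
    {N K S : ℕ} (Ψ : Matrix (Fin N) (Fin K) ℝ) (y : Fin N → ℝ)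
    (gr : Fin K → Fin S) (c : Fin S → ℝ) (hc : ∀ g, 0 < c g)
    (ν : ℝ) (hν : ν ∈ Set.Ioo (0 : ℝ) 1)
    (lam₁ : ℝ) (hlam₁ : 0 ≤ lam₁) (lam₂ : ℝ) (hlam₂ : 0 ≤ lam₂)
    (R : Matrix (Fin K) (Fin K) ℝ) (hR : R.PosSemidef)
    (hM : (Ψᵀ * Ψ + lam₂ • R).IsHermitian)
    (ρmin : ℝ) (hρ : IsLeast (Set.range hM.eigenvalues) ρmin) (hρpos : 0 < ρmin)
    (b : Fin K → ℝ)
    (hb : b = ((Ψᵀ * Ψ + lam₂ • R)⁻¹).mulVec (Ψᵀ.mulVec y))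
    (L : (Fin K → ℝ) → ℝ)
    (hL : ∀ γ, L γ = (y - Ψ.mulVec γ) ⬝ᵥ (y - Ψ.mulVec γ) +
      lam₁ * ∑ g, c g * (∑ i ∈ Finset.univ.filter (fun i => gr i = g), |γ i|) ^ ν +
      lam₂ * (γ ⬝ᵥ R.mulVec γ))
    (γhat : Fin K → ℝ) (hmin : ∀ γ, L γhat ≤ L γ)
    (hbnz : ∀ g, 0 < ∑ i ∈ Finset.univ.filter (fun i => gr i = g), |b i|) :
    Real.sqrt ((γhat - b) ⬝ᵥ (γhat - b)) ≤
      2 * lam₁ / ρmin *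
        Real.sqrt (∑ g, ((Finset.univ.filter (fun i => gr i = g)).card : ℝ) * (c g) ^ 2 *
          (∑ i ∈ Finset.univ.filter (fun i => gr i = g), |b i|) ^ (2 * (ν - 1))) :=
  group_bridge_proximity_to_ridge_general Ψ y gr c hc ν hν lam₁ hlam₁ lam₂ R hM ρmin hρ hρpos b hb L
    hL γhat hmin hbnz
end
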